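/- Let λ be a Borel measure on ℝ^{n+2} such that the pushforward of λ under g_t equals λ for every t ∈ ℝ. Then for every c > 0, all T, r > 0, and every Borel set A ⊆ S^{n−1}, one has r·λ(F_{T,c,A}) = T·λ(F_{r,c,A}) (as an equality of extended nonnegative reals). -/

import Mathlib

noncomputable section

open MeasureTheory Metric Filter Topology
open scoped ENNReal

/-- The index of the coordinate `x_{n+2}` (0-indexed: `n+1`). -/
def lastC (n : ℕ) : Fin (n + 2) := Fin.last (n + 1)

/-- The index of the coordinate `x_{n+1}` (0-indexed: `n`). -/
def sndC (n : ℕ) : Fin (n + 2) := ⟨n, by omega⟩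

/-- The quadratic form `Q(x) = x_1² + ⋯ + x_{n+1}² − x_{n+2}²`. -/
def Qf (n : ℕ) (x : EuclideanSpace ℝ (Fin (n + 2))) : ℝ :=
  (∑ i : Fin (n + 1), x (Fin.castSucc i) ^ 2) - x (lastC n) ^ 2

/-- The positive light cone. -/
def lightCone (n : ℕ) : Set (EuclideanSpace ℝ (Fin (n + 2))) :=
  {x | Qf n x = 0 ∧ 0 ≤ x (lastC n)}

/-- `Λ₀`: the intersection of the light cone with `ℤ^{n+1} × ℤ_{>0}`. -/
def Lat0 (n : ℕ) : Set (EuclideanSpace ℝ (Fin (n + 2))) :=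
  {x | x ∈ lightCone n ∧ (∀ i, ∃ m : ℤ, x i = (m : ℝ)) ∧ 0 < x (lastC n)}

/-- The set `F_{T,c}`. -/
def Fset (n : ℕ) (T c : ℝ) : Set (EuclideanSpace ℝ (Fin (n + 2))) :=
  {x | x ∈ lightCone n ∧ x (lastC n) ^ 2 - x (sndC n) ^ 2 < c ^ 2 ∧
    1 ≤ x (sndC n) + x (lastC n) ∧ x (sndC n) + x (lastC n) < Real.exp T}

/-- The set `E_{T,c}`. -/
def Eset (n : ℕ) (T c : ℝ) : Set (EuclideanSpace ℝ (Fin (n + 2))) :=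
  {x | x ∈ lightCone n ∧ 2 * x (lastC n) * (x (lastC n) - x (sndC n)) < c ^ 2 ∧
    1 ≤ x (lastC n) ∧ x (lastC n) < Real.cosh T}

/-- The first `n+1` coordinates of a point of `ℝ^{n+2}`. -/
def firstPart (n : ℕ) (x : EuclideanSpace ℝ (Fin (n + 2))) : EuclideanSpace ℝ (Fin (n + 1)) :=
  WithLp.toLp 2 (fun i => x (Fin.castSucc i))

/-- The first `n` coordinates of a point of `ℝ^{n+2}`. -/
def headN (n : ℕ) (x : EuclideanSpace ℝ (Fin (n + 2))) : EuclideanSpace ℝ (Fin n) :=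
  WithLp.toLp 2 (fun i => x (Fin.castLE (by omega) i : Fin (n + 2)))

/-- The direction map `π(x) = (x_1,…,x_n)/‖(x_1,…,x_n)‖`. -/
def dir (n : ℕ) (x : EuclideanSpace ℝ (Fin (n + 2))) : EuclideanSpace ℝ (Fin n) :=
  ‖headN n x‖⁻¹ • headN n x

/-- The one-parameter diagonal flow `g_t`. -/
def gmap (n : ℕ) (t : ℝ) (x : EuclideanSpace ℝ (Fin (n + 2))) :
    EuclideanSpace ℝ (Fin (n + 2)) :=
  WithLp.toLp 2 fun i =>
    if i = sndC n then Real.cosh t * x (sndC n) - Real.sinh t * x (lastC n)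
    else if i = lastC n then - Real.sinh t * x (sndC n) + Real.cosh t * x (lastC n)
    else x i

/-- The set `F_{T,c,A}`. -/
def FsetA (n : ℕ) (T c : ℝ) (A : Set ↑(sphere (0 : EuclideanSpace ℝ (Fin n)) 1)) :
    Set (EuclideanSpace ℝ (Fin (n + 2))) :=
  {x | x ∈ Fset n T c ∧ headN n x ≠ 0 ∧ dir n x ∈ Subtype.val '' A}

/-- The set `E_{T,c,A}`. -/
def EsetA (n : ℕ) (T c : ℝ) (A : Set ↑(sphere (0 : EuclideanSpace ℝ (Fin n)) 1)) :
    Set (EuclideanSpace ℝ (Fin (n + 2))) :=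
  {x | x ∈ Eset n T c ∧ headN n x ≠ 0 ∧ dir n x ∈ Subtype.val '' A}

/-!
The flow `g_t` preserves `Q`, the quantity `x_{n+2}² − x_{n+1}²` and the direction `π(x)`, and it
multiplies the null coordinate `x_{n+1} + x_{n+2}` by `e^{-t}`. Restrict `λ` to the `g_t`-invariant
set where all conditions defining `F_{T,c,A}` except the bounds on `x_{n+1} + x_{n+2}` hold, and push
it forward along `log (x_{n+1} + x_{n+2})`: the result `ν` is a translation-invariant measure on `ℝ`
with `λ(F_{T,c,A}) = ν [0, T)`. By uniqueness of Haar measure, `ν [0, T) = k T` for a constant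
`k ∈ [0, ∞]`.
-/

open Set

theorem exists_measure_Ico_eq_mul_of_isAddLeftInvariant (ν : Measure ℝ) [ν.IsAddLeftInvariant] :
    ∃ k : ℝ≥0∞, ∀ a b : ℝ, ν (Ico a b) = k * ENNReal.ofReal (b - a) := by
  by_cases hfin : ν (Ioo 0 1) = ∞
  · -- A left-invariant measure that is finite on one nonempty open set is finite on compacts.
    refine ⟨∞, fun a b => ?_⟩
    rcases le_or_gt b a with hba | hab
    · simp [Ico_eq_empty_of_le hba, ENNReal.ofReal_of_nonpos (sub_nonpos.2 hba)]
    rw [ENNReal.top_mul (by simpa using hab)]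
    by_contra h
    have hIcc := measure_lt_top_of_isCompact_of_isAddLeftInvariant (Ioo a b) isOpen_Ioo
      (nonempty_Ioo.2 hab) (fun h' => h (measure_mono_top Ioo_subset_Ico_self h'))
      (isCompact_Icc (a := (0 : ℝ)) (b := 1))
    exact hIcc.ne (measure_mono_top Ioo_subset_Icc_self hfin)
  · have := isLocallyFiniteMeasure_of_vaddInvariant ℝ isOpen_Ioo (nonempty_Ioo.2 one_pos) hfin
    refine ⟨ν.addHaarScalarFactor volume, fun a b => ?_⟩
    rw [ν.measure_isAddInvariant_eq_smul_of_isCompact_closure volume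
      (isCompact_Icc.closure_of_subset Ico_subset_Icc_self), Real.volume_Ico, ENNReal.smul_def,
      smul_eq_mul]

/-- `log (x_{n+1} + x_{n+2})`; a junk value unless `0 < x_{n+1} + x_{n+2}`. -/
def logNullCoord (n : ℕ) (x : EuclideanSpace ℝ (Fin (n + 2))) : ℝ :=
  Real.log (x (sndC n) + x (lastC n))

def coneSector (n : ℕ) (c : ℝ) (A : Set ↑(sphere (0 : EuclideanSpace ℝ (Fin n)) 1)) :
    Set (EuclideanSpace ℝ (Fin (n + 2))) :=
  {x | Qf n x = 0 ∧ x (lastC n) ^ 2 - x (sndC n) ^ 2 < c ^ 2 ∧ 0 < x (sndC n) + x (lastC n) ∧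
    headN n x ≠ 0 ∧ dir n x ∈ Subtype.val '' A}

section LorentzFlow

variable {n : ℕ}

lemma sndC_ne_lastC (n : ℕ) : sndC n ≠ lastC n := by
  simp [sndC, lastC, Fin.ext_iff]

lemma gmap_sndC (t : ℝ) (x : EuclideanSpace ℝ (Fin (n + 2))) :
    gmap n t x (sndC n) = Real.cosh t * x (sndC n) - Real.sinh t * x (lastC n) := by
  simp [gmap]

lemma gmap_lastC (t : ℝ) (x : EuclideanSpace ℝ (Fin (n + 2))) :
    gmap n t x (lastC n) = -Real.sinh t * x (sndC n) + Real.cosh t * x (lastC n) := by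
  simp [gmap, (sndC_ne_lastC n).symm]

lemma gmap_apply_of_ne {i : Fin (n + 2)} (h₁ : i ≠ sndC n) (h₂ : i ≠ lastC n) (t : ℝ)
    (x : EuclideanSpace ℝ (Fin (n + 2))) : gmap n t x i = x i := by
  simp [gmap, h₁, h₂]

lemma gmap_zero (x : EuclideanSpace ℝ (Fin (n + 2))) : gmap n 0 x = x := by
  ext i
  by_cases h₁ : i = sndC n
  · simp [h₁, gmap_sndC]
  by_cases h₂ : i = lastC n
  · simp [h₂, gmap_lastC]
  exact gmap_apply_of_ne h₁ h₂ 0 x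

lemma gmap_gmap (s t : ℝ) (x : EuclideanSpace ℝ (Fin (n + 2))) :
    gmap n s (gmap n t x) = gmap n (s + t) x := by
  ext i
  by_cases h₁ : i = sndC n
  · subst h₁
    simp only [gmap_sndC, gmap_lastC, Real.cosh_add, Real.sinh_add]
    ring
  by_cases h₂ : i = lastC n
  · subst h₂
    simp only [gmap_sndC, gmap_lastC, Real.cosh_add, Real.sinh_add]
    ring
  simp only [gmap_apply_of_ne h₁ h₂]

lemma continuous_gmap (t : ℝ) : Continuous (gmap n t) := by
  refine (PiLp.continuous_toLp 2 _).comp (continuous_pi fun i => ?_)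
  split_ifs <;> fun_prop

lemma measurableEmbedding_gmap (t : ℝ) : MeasurableEmbedding (gmap n t) :=
  (Homeomorph.mk
    { toFun := gmap n t
      invFun := gmap n (-t)
      left_inv := fun x => by rw [gmap_gmap, neg_add_cancel, gmap_zero]
      right_inv := fun x => by rw [gmap_gmap, add_neg_cancel, gmap_zero] }
    (continuous_gmap t) (continuous_gmap (-t))).measurableEmbedding

lemma headN_gmap (t : ℝ) (x : EuclideanSpace ℝ (Fin (n + 2))) :
    headN n (gmap n t x) = headN n x := by
  ext i
  exact gmap_apply_of_ne (by simp [sndC, Fin.ext_iff]; omega)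
    (by simp [lastC, Fin.ext_iff]; omega) t x

lemma dir_gmap (t : ℝ) (x : EuclideanSpace ℝ (Fin (n + 2))) :
    dir n (gmap n t x) = dir n x := by
  rw [dir, dir, headN_gmap]

lemma Qf_eq_sum_add (x : EuclideanSpace ℝ (Fin (n + 2))) :
    Qf n x = ∑ i : Fin n, x (Fin.castSucc (Fin.castSucc i)) ^ 2
      + (x (sndC n) ^ 2 - x (lastC n) ^ 2) := by
  have : (Fin.last n).castSucc = sndC n := by simp [sndC, Fin.ext_iff]
  rw [Qf, Fin.sum_univ_castSucc, this]
  ring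

lemma Qf_gmap (t : ℝ) (x : EuclideanSpace ℝ (Fin (n + 2))) : Qf n (gmap n t x) = Qf n x := by
  have hfix (i : Fin n) : gmap n t x i.castSucc.castSucc = x i.castSucc.castSucc :=
    gmap_apply_of_ne (by simp [sndC, Fin.ext_iff]; omega) (by simp [lastC, Fin.ext_iff]; omega) t x
  simp only [Qf_eq_sum_add, hfix, gmap_sndC, gmap_lastC]
  linear_combination (x (sndC n) ^ 2 - x (lastC n) ^ 2) * Real.cosh_sq_sub_sinh_sq t

lemma gmap_lastC_sq_sub_sndC_sq (t : ℝ) (x : EuclideanSpace ℝ (Fin (n + 2))) :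
    gmap n t x (lastC n) ^ 2 - gmap n t x (sndC n) ^ 2 = x (lastC n) ^ 2 - x (sndC n) ^ 2 := by
  rw [gmap_sndC, gmap_lastC]
  linear_combination (x (lastC n) ^ 2 - x (sndC n) ^ 2) * Real.cosh_sq_sub_sinh_sq t

lemma gmap_sndC_add_lastC (t : ℝ) (x : EuclideanSpace ℝ (Fin (n + 2))) :
    gmap n t x (sndC n) + gmap n t x (lastC n) = Real.exp (-t) * (x (sndC n) + x (lastC n)) := by
  rw [gmap_sndC, gmap_lastC, ← Real.cosh_sub_sinh]
  ring

lemma lastC_nonneg_of_Qf_eq_zero {x : EuclideanSpace ℝ (Fin (n + 2))} (hQ : Qf n x = 0)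
    (hpos : 0 < x (sndC n) + x (lastC n)) : 0 ≤ x (lastC n) := by
  rw [Qf_eq_sum_add] at hQ
  have : 0 ≤ ∑ i : Fin n, x (Fin.castSucc (Fin.castSucc i)) ^ 2 := by positivity
  nlinarith

lemma measurable_logNullCoord : Measurable (logNullCoord n) := by
  unfold logNullCoord
  fun_prop

lemma logNullCoord_gmap (t : ℝ) {x : EuclideanSpace ℝ (Fin (n + 2))}
    (hx : 0 < x (sndC n) + x (lastC n)) : logNullCoord n (gmap n t x) = logNullCoord n x - t := by
  rw [logNullCoord, logNullCoord, gmap_sndC_add_lastC, Real.log_mul (Real.exp_pos _).ne' hx.ne',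
    Real.log_exp]
  ring

lemma gmap_preimage_coneSector (t c : ℝ) (A : Set ↑(sphere (0 : EuclideanSpace ℝ (Fin n)) 1)) :
    gmap n t ⁻¹' coneSector n c A = coneSector n c A := by
  ext x
  simp only [coneSector, mem_preimage, mem_ofPred_eq, Qf_gmap, gmap_lastC_sq_sub_sndC_sq,
    gmap_sndC_add_lastC, headN_gmap, dir_gmap, mul_pos_iff_of_pos_left (Real.exp_pos _)]

lemma FsetA_eq_coneSector_inter (T c : ℝ) (A : Set ↑(sphere (0 : EuclideanSpace ℝ (Fin n)) 1)) :
    FsetA n T c A = coneSector n c A ∩ logNullCoord n ⁻¹' Ico 0 T := by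
  ext x
  simp only [FsetA, Fset, lightCone, coneSector, logNullCoord, mem_inter_iff, mem_preimage,
    mem_Ico, mem_ofPred_eq]
  constructor
  · rintro ⟨⟨⟨hQ, -⟩, hc, h1, hT⟩, hx, hA⟩
    have hpos : 0 < x (sndC n) + x (lastC n) := by linarith
    exact ⟨⟨hQ, hc, hpos, hx, hA⟩, Real.log_nonneg h1, (Real.log_lt_iff_lt_exp hpos).2 hT⟩
  · rintro ⟨⟨hQ, hc, hpos, hx, hA⟩, h0, hT⟩
    exact ⟨⟨⟨hQ, lastC_nonneg_of_Qf_eq_zero hQ hpos⟩, hc, (Real.log_nonneg_iff hpos).1 h0,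
      (Real.log_lt_iff_lt_exp hpos).1 hT⟩, hx, hA⟩

variable {lam : Measure (EuclideanSpace ℝ (Fin (n + 2)))}

lemma measure_FsetA_eq_map_logNullCoord (T c : ℝ)
    (A : Set ↑(sphere (0 : EuclideanSpace ℝ (Fin n)) 1)) :
    lam (FsetA n T c A) = ((lam.restrict (coneSector n c A)).map (logNullCoord n)) (Ico 0 T) := by
  rw [Measure.map_apply measurable_logNullCoord measurableSet_Ico,
    Measure.restrict_apply (measurable_logNullCoord measurableSet_Ico),
    FsetA_eq_coneSector_inter, inter_comm]

lemma isAddLeftInvariant_map_logNullCoord (hinv : ∀ t : ℝ, Measure.map (gmap n t) lam = lam)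
    (c : ℝ) (A : Set ↑(sphere (0 : EuclideanSpace ℝ (Fin n)) 1)) :
    ((lam.restrict (coneSector n c A)).map (logNullCoord n)).IsAddLeftInvariant := by
  refine ⟨fun t => ?_⟩
  have hpres := (MeasurePreserving.mk (continuous_gmap (-t)).measurable
    (hinv (-t))).restrict_preimage_emb (measurableEmbedding_gmap (-t)) (coneSector n c A)
  rw [gmap_preimage_coneSector] at hpres
  have hflow : (t + ·) ∘ logNullCoord n =ᵐ[lam.restrict (coneSector n c A)]
      logNullCoord n ∘ gmap n (-t) :=
    ae_restrict_of_ae_restrict_of_subset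
      (t := {x : EuclideanSpace ℝ (Fin (n + 2)) | 0 < x (sndC n) + x (lastC n)})
      (fun x hx => hx.2.2.1) <| ae_restrict_of_forall_mem (measurableSet_lt measurable_const
        (by fun_prop)) fun x (hx : 0 < x (sndC n) + x (lastC n)) => by
        simp only [Function.comp_apply, logNullCoord_gmap _ hx]
        ring
  rw [Measure.map_map (measurable_const_add t) measurable_logNullCoord, Measure.map_congr hflow,
    ← Measure.map_map measurable_logNullCoord (continuous_gmap _).measurable, hpres.map_eq]

end LorentzFlow

theorem FsetA_measure_proportional_general (n : ℕ)
    (lam : Measure (EuclideanSpace ℝ (Fin (n + 2))))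
    (hinv : ∀ t : ℝ, Measure.map (gmap n t) lam = lam)
    (c : ℝ) (T r : ℝ)
    (A : Set ↑(sphere (0 : EuclideanSpace ℝ (Fin n)) 1)) :
    ENNReal.ofReal r * lam (FsetA n T c A) = ENNReal.ofReal T * lam (FsetA n r c A) := by
  have := isAddLeftInvariant_map_logNullCoord hinv c A
  obtain ⟨k, hk⟩ := exists_measure_Ico_eq_mul_of_isAddLeftInvariant
    ((lam.restrict (coneSector n c A)).map (logNullCoord n))
  rw [measure_FsetA_eq_map_logNullCoord, measure_FsetA_eq_map_logNullCoord, hk, hk, sub_zero,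
    sub_zero]
  ring

/-- **Equation (3.2)**: for a `g_t`-invariant Borel measure `λ`,
`r·λ(F_{T,c,A}) = T·λ(F_{r,c,A})`. -/
theorem FsetA_measure_proportional (n : ℕ) (hn : 1 ≤ n)
    (lam : Measure (EuclideanSpace ℝ (Fin (n + 2))))
    (hinv : ∀ t : ℝ, Measure.map (gmap n t) lam = lam)
    (c : ℝ) (hc : 0 < c) (T r : ℝ) (hT : 0 < T) (hr : 0 < r)
    (A : Set ↑(sphere (0 : EuclideanSpace ℝ (Fin n)) 1)) (hA : MeasurableSet A) :
    ENNReal.ofReal r * lam (FsetA n T c A) = ENNReal.ofReal T * lam (FsetA n r c A) :=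
  FsetA_measure_proportional_general n lam hinv c T r A
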